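/- arXiv:math/0405256 — 2 statements merged into one kernel-verified Lean document; each statement's English description precedes it below -/
import Mathlib

section
/- Let a = (a₀,…,aₙ) be a tuple of integers ≥ 2 with n ≥ 2, of the form (2c₁, 2c₂, …, 2c_{m−2}, 2, a_{m−1}) where (c_k) is the Sylvester sequence and a_{m−1} satisfies 2c_{m−2} < a_{m−1} < 2c_{m−1} − 2. Then 1 < Σᵢ 1/aᵢ. -/
/-!
Writing `P n = c₁ ⋯ cₙ`, the Sylvester recurrence `c_{n+1} = P n + 1` gives the telescoping
identity `∑_{i ≤ n} 1/cᵢ = 1 - 1/P n`. For `n = m - 2` the tuple's sum is therefore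
`1 - 1/(2 P n) + 1/a_{m-1}`, and the upper bound `a_{m-1} < 2 c_{m-1} - 2 = 2 P n` is exactly
what makes the last term beat the deficit.
-/

namespace Sylvester

open Finset

variable {c : ℕ → ℕ} (hc : ∀ n, c (n + 1) = ∏ i ∈ Icc 1 n, c i + 1)
include hc

theorem prod_Icc_pos (n : ℕ) : 0 < ∏ i ∈ Icc 1 n, c i :=
  prod_pos fun i hi => by
    obtain ⟨k, rfl⟩ : ∃ k, i = k + 1 := ⟨i - 1, by grind⟩
    rw [hc k]
    exact Nat.succ_pos _

theorem sum_Icc_inv_eq_one_sub_inv_prod {K : Type*} [Field K] [CharZero K] (n : ℕ) :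
    ∑ i ∈ Icc 1 n, (c i : K)⁻¹ = 1 - ((∏ i ∈ Icc 1 n, c i : ℕ) : K)⁻¹ := by
  induction n with
  | zero => simp
  | succ n ih =>
    rw [sum_Icc_succ_top (by omega), ih, prod_Icc_succ_top (by omega), hc n]
    have hP : ((∏ i ∈ Icc 1 n, c i : ℕ) : K) ≠ 0 := by
      exact_mod_cast (prod_Icc_pos hc n).ne'
    generalize ∏ i ∈ Icc 1 n, c i = P at hP ⊢
    have hP1 : (P : K) + 1 ≠ 0 := by exact_mod_cast P.succ_ne_zero
    push_cast
    field_simp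
    ring

end Sylvester

theorem fano_condition_sylvester_tuple (c : ℕ → ℕ) (h1 : c 1 = 2)
    (hrec : ∀ k, 1 ≤ k → c (k + 1) = (∏ i ∈ Finset.Icc 1 k, c i) + 1)
    (m : ℕ) (hm : 3 ≤ m) (A : ℕ)
    (hA1 : 2 * c (m - 2) < A) (hA2 : A < 2 * c (m - 1) - 2) :
    (1 : ℚ) < (∑ i ∈ Finset.Icc 1 (m - 2), (1 : ℚ) / (2 * c i : ℚ)) +
      1 / 2 + 1 / (A : ℚ) := by
  have hc : ∀ n, c (n + 1) = ∏ i ∈ Finset.Icc 1 n, c i + 1 := by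
    rintro (_ | n)
    · simp [h1]
    · exact hrec _ n.succ_pos
  obtain ⟨n, rfl⟩ : ∃ n, m = n + 2 := ⟨m - 2, by omega⟩
  simp only [Nat.add_sub_cancel, show n + 2 - 1 = n + 1 by omega, hc n] at hA1 hA2 ⊢
  set P := ∏ i ∈ Finset.Icc 1 n, c i
  have hsum : ∑ i ∈ Finset.Icc 1 n, (1 : ℚ) / (2 * c i) = 1 / 2 - 1 / (2 * P) := by
    simp only [one_div, mul_inv, ← Finset.mul_sum, Sylvester.sum_Icc_inv_eq_one_sub_inv_prod hc]
    ring
  have hA : (0 : ℚ) < A := by exact_mod_cast hA1.pos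
  have hAP : (A : ℚ) < 2 * P := by exact_mod_cast (show A < 2 * P by omega)
  have := one_div_lt_one_div_of_lt hA hAP
  linarith
end

section
/- In formula τ = (1/N) Σ_{j=0}^{N−1} ∏ᵢ cot(π(2j+1)/(2aᵢ)) · cot(π(2j+1)/(2N)), the value is independent of the choice of common multiple N of the aᵢ's: if N and N' are both common multiples of a₁,…,a_{2k+1}, the two resulting sums are equal. -/
/-!
Replacing `N` by a multiple `m N` multiplies the sum by exactly `m`: the product of cotangents
at `a i` is `N`-periodic in `j`, so the `m` indices `j + r N` share it, and the multiplication
formula `∑_{r<m} cot (x + r π / m) = m cot (m x)` collapses their first factors. That formula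
is the partial-fraction identity `∑_r 1 / (1 - z ζ^r) = m / (1 - z^m)` over the `m`-th roots
of unity, read through `cot w = i - 2 i / (1 - e^{2 i w})`. Hence `N` and `N'` both give the
value obtained from `N N'`.
-/

open Real Finset Function

theorem Finset.sum_range_mul_eq_sum_sum {M : Type*} [AddCommMonoid M] (f : ℕ → M) (m n : ℕ) :
    ∑ j ∈ range (m * n), f j = ∑ j ∈ range n, ∑ r ∈ range m, f (j + r * n) := by
  rw [← Fin.sum_univ_eq_sum_range, ← finProdFinEquiv.sum_comp, Fintype.sum_prod_type,
    Finset.sum_comm, ← Fin.sum_univ_eq_sum_range]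
  refine sum_congr rfl fun j _ => ?_
  rw [← Fin.sum_univ_eq_sum_range (fun r => f (j + r * n))]
  simp [finProdFinEquiv_apply_val, mul_comm]

theorem IsPrimitiveRoot.geom_sum_pow_eq_zero {K : Type*} [Field K] {ζ : K} {m t : ℕ}
    (hζ : IsPrimitiveRoot ζ m) (ht0 : 0 < t) (htm : t < m) :
    ∑ r ∈ range m, (ζ ^ t) ^ r = 0 := by
  rw [geom_sum_eq (hζ.pow_ne_one_of_pos_of_lt ht0.ne' htm), ← pow_mul, mul_comm, pow_mul,
    hζ.pow_eq_one, one_pow, sub_self, zero_div]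

theorem IsPrimitiveRoot.mul_pow_pow {M : Type*} [CommMonoid M] {ζ : M} {m : ℕ}
    (hζ : IsPrimitiveRoot ζ m) (z : M) (r : ℕ) : (z * ζ ^ r) ^ m = z ^ m := by
  rw [mul_pow, ← pow_mul, mul_comm r, pow_mul, hζ.pow_eq_one, one_pow, mul_one]

theorem IsPrimitiveRoot.sum_inv_one_sub_mul_pow {K : Type*} [Field K] {ζ z : K} {m : ℕ}
    (hζ : IsPrimitiveRoot ζ m) (hz : z ^ m ≠ 1) :
    ∑ r ∈ range m, (1 - z * ζ ^ r)⁻¹ = m / (1 - z ^ m) := by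
  have hm : m ≠ 0 := by rintro rfl; exact hz (pow_zero z)
  have hgeom (r : ℕ) :
      (1 - z * ζ ^ r)⁻¹ * (1 - z ^ m) = ∑ t ∈ range m, z ^ t * (ζ ^ t) ^ r := by
    have hne : 1 - z * ζ ^ r ≠ 0 :=
      sub_ne_zero.mpr fun h => hz (by rw [← hζ.mul_pow_pow z r, ← h, one_pow])
    rw [← hζ.mul_pow_pow z r, ← mul_neg_geom_sum, inv_mul_cancel_left₀ hne]
    simp only [mul_pow, ← pow_mul, mul_comm r]
  rw [eq_div_iff (sub_ne_zero.mpr hz.symm), sum_mul, sum_congr rfl fun r _ => hgeom r, sum_comm,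
    sum_eq_single_of_mem 0 (mem_range.mpr (Nat.pos_of_ne_zero hm))]
  · simp
  · intro t ht ht0
    rw [← mul_sum, hζ.geom_sum_pow_eq_zero (Nat.pos_of_ne_zero ht0) (mem_range.mp ht), mul_zero]

namespace Complex

theorem one_sub_exp_two_mul_I_mul (w : ℂ) :
    1 - exp (2 * I * w) = -2 * I * sin w * exp (w * I) := by
  have hsq : exp (2 * I * w) = exp (w * I) * exp (w * I) := by
    rw [← exp_add]; ring_nf
  have hinv : exp (-w * I) * exp (w * I) = 1 := by
    rw [← exp_add]; ring_nf; exact exp_zero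
  rw [sin, hsq]
  linear_combination (-1) * hinv + (exp (-w * I) * exp (w * I) -
    exp (w * I) * exp (w * I)) * I_sq

theorem exp_two_mul_I_mul_eq_one_iff {w : ℂ} :
    exp (2 * I * w) = 1 ↔ sin w = 0 := by
  rw [← sub_eq_zero, ← neg_eq_zero, neg_sub, one_sub_exp_two_mul_I_mul]
  simp [exp_ne_zero, I_ne_zero]

theorem cot_eq_I_sub_of_sin_ne_zero {w : ℂ} (hw : sin w ≠ 0) :
    cot w = I - 2 * I * (1 - exp (2 * I * w))⁻¹ := by
  have hE : 1 - exp (2 * I * w) ≠ 0 :=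
    sub_ne_zero.mpr fun h => hw (exp_two_mul_I_mul_eq_one_iff.mp h.symm)
  rw [cot_eq_exp_ratio]
  field_simp
  linear_combination (1 + exp (2 * I * w)) * I_sq

theorem sum_cot_add_mul_pi_div {m : ℕ} {θ : ℂ} (h : sin (m * θ) ≠ 0) :
    ∑ r ∈ range m, cot (θ + r * (π / m)) = m * cot (m * θ) := by
  have hm : m ≠ 0 := by rintro rfl; simp at h
  set ζ := exp (2 * π * I / m)
  set z := exp (2 * I * θ)
  have hζ : IsPrimitiveRoot ζ m := isPrimitiveRoot_exp m hm
  have hzm : z ^ m = exp (2 * I * (m * θ)) := by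
    rw [← exp_nat_mul]; ring_nf
  have hz : z ^ m ≠ 1 := by rwa [hzm, Ne, exp_two_mul_I_mul_eq_one_iff]
  have hexp (r : ℕ) : exp (2 * I * (θ + r * (π / m))) = z * ζ ^ r := by
    rw [← exp_nat_mul, ← exp_add]
    congr 1
    field_simp
  have hterm (r : ℕ) : cot (θ + r * (π / m)) = I - 2 * I * (1 - z * ζ ^ r)⁻¹ := by
    have hne : z * ζ ^ r ≠ 1 := fun h1 => hz (by rw [← hζ.mul_pow_pow z r, h1, one_pow])
    rw [cot_eq_I_sub_of_sin_ne_zero (by rwa [Ne, ← exp_two_mul_I_mul_eq_one_iff, hexp]), hexp]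
  rw [sum_congr rfl fun r _ => hterm r, sum_sub_distrib, sum_const, card_range, ← mul_sum,
    hζ.sum_inv_one_sub_mul_pow hz, cot_eq_I_sub_of_sin_ne_zero h, ← hzm]
  have h1 : 1 - z ^ m ≠ 0 := sub_ne_zero.mpr hz.symm
  field_simp
  ring

end Complex

theorem Real.sum_cot_add_mul_pi_div {m : ℕ} {x : ℝ} (h : sin (m * x) ≠ 0) :
    ∑ r ∈ range m, cot (x + r * (π / m)) = m * cot (m * x) := by
  apply Complex.ofReal_injective
  push_cast [Complex.ofReal_cot]
  exact Complex.sum_cot_add_mul_pi_div (by exact_mod_cast h)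

theorem Real.cot_periodic : Periodic cot π := by
  simpa only [comp_def, ← cot_inv_eq_tan, inv_inv] using tan_periodic.comp Inv.inv

theorem periodic_cot_pi_mul_odd_div {a N : ℕ} (haN : a ∣ N) :
    Periodic (fun j : ℕ => cot (π * (2 * j + 1) / (2 * a))) N := by
  obtain ⟨c, rfl⟩ := haN
  rcases eq_or_ne a 0 with rfl | ha
  · simp
  intro j
  have harg : π * (2 * ((j + a * c : ℕ) : ℝ) + 1) / (2 * a) =
      π * (2 * j + 1) / (2 * a) + c * π := by
    push_cast
    field_simp
    ring
  simp only
  rw [harg, cot_periodic.nat_mul c]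

noncomputable def cotAverage (N : ℕ) (f : ℕ → ℝ) : ℝ :=
  (N : ℝ)⁻¹ * ∑ j ∈ range N, cot (π * (2 * j + 1) / (2 * N)) * f j

theorem sin_pi_mul_odd_div_pos {N j : ℕ} (hj : j < N) : 0 < sin (π * (2 * j + 1) / (2 * N)) := by
  have hN : (0 : ℝ) < N := by exact_mod_cast (Nat.zero_le j).trans_lt hj
  apply sin_pos_of_pos_of_lt_pi (by positivity)
  rw [div_lt_iff₀ (by positivity)]
  have hodd : (2 * j + 1 : ℝ) < 2 * N := by exact_mod_cast (by omega : 2 * j + 1 < 2 * N)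
  exact mul_lt_mul_of_pos_left hodd pi_pos

theorem cotAverage_mul_of_periodic {f : ℕ → ℝ} {N m : ℕ} (hf : Periodic f N) (hm : 0 < m) :
    cotAverage (m * N) f = cotAverage N f := by
  rcases N.eq_zero_or_pos with rfl | hN
  · simp [cotAverage]
  have hfiber : ∀ j ∈ range N, ∑ r ∈ range m,
      cot (π * (2 * ((j + r * N : ℕ) : ℝ) + 1) / (2 * ((m * N : ℕ) : ℝ))) * f (j + r * N) =
      m * (cot (π * (2 * j + 1) / (2 * N)) * f j) := by
    intro j hj
    set x := π * (2 * j + 1) / (2 * ((m * N : ℕ) : ℝ))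
    have hmx : m * x = π * (2 * j + 1) / (2 * N) := by
      simp only [x]; push_cast; field_simp
    have harg (r : ℕ) : π * (2 * ((j + r * N : ℕ) : ℝ) + 1) / (2 * ((m * N : ℕ) : ℝ)) =
        x + r * (π / m) := by
      simp only [x]; push_cast; field_simp; ring
    have hsin : sin (m * x) ≠ 0 := by
      rw [hmx]; exact (sin_pi_mul_odd_div_pos (mem_range.mp hj)).ne'
    calc _ = (∑ r ∈ range m, cot (x + r * (π / m))) * f j := by
          rw [sum_mul]
          refine sum_congr rfl fun r _ => ?_
          rw [harg, show f (j + r * N) = f j by simpa using hf.nat_mul r j]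
      _ = m * (cot (π * (2 * j + 1) / (2 * N)) * f j) := by
          rw [Real.sum_cot_add_mul_pi_div hsin, hmx, mul_assoc]
  rw [cotAverage, sum_range_mul_eq_sum_sum, sum_congr rfl hfiber, ← mul_sum, cotAverage]
  push_cast
  field_simp

theorem zagier_signature_formula_well_defined_general (k : ℕ) (a : Fin (2 * k + 1) → ℕ)
    (N N' : ℕ) (hN0 : 0 < N) (hN'0 : 0 < N')
    (hN : ∀ i, a i ∣ N) (hN' : ∀ i, a i ∣ N') :
    ((-1 : ℝ) ^ k / (N : ℝ)) * ∑ j ∈ Finset.range N,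
        (Real.cot (π * (2 * (j : ℝ) + 1) / (2 * N)) *
          ∏ i, Real.cot (π * (2 * (j : ℝ) + 1) / (2 * (a i : ℝ)))) =
      ((-1 : ℝ) ^ k / (N' : ℝ)) * ∑ j ∈ Finset.range N',
        (Real.cot (π * (2 * (j : ℝ) + 1) / (2 * N')) *
          ∏ i, Real.cot (π * (2 * (j : ℝ) + 1) / (2 * (a i : ℝ)))) := by
  set f : ℕ → ℝ := fun j => ∏ i, cot (π * (2 * (j : ℝ) + 1) / (2 * (a i : ℝ)))
  have hf {M : ℕ} (hM : ∀ i, a i ∣ M) : Periodic f M := fun j =>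
    prod_congr rfl fun i _ => periodic_cot_pi_mul_odd_div (hM i) j
  have hform (M : ℕ) :
      (-1 : ℝ) ^ k / M * ∑ j ∈ range M, cot (π * (2 * (j : ℝ) + 1) / (2 * M)) * f j =
        (-1) ^ k * cotAverage M f := by
    rw [cotAverage, div_eq_mul_inv, mul_assoc]
  rw [hform, hform]
  congr 1
  calc cotAverage N f = cotAverage (N' * N) f := (cotAverage_mul_of_periodic (hf hN) hN'0).symm
    _ = cotAverage (N * N') f := by rw [mul_comm]
    _ = cotAverage N' f := cotAverage_mul_of_periodic (hf hN') hN0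

theorem zagier_signature_formula_well_defined (k : ℕ) (a : Fin (2 * k + 1) → ℕ)
    (ha : ∀ i, 2 ≤ a i) (N N' : ℕ) (hN0 : 0 < N) (hN'0 : 0 < N')
    (hN : ∀ i, a i ∣ N) (hN' : ∀ i, a i ∣ N') :
    ((-1 : ℝ) ^ k / (N : ℝ)) * ∑ j ∈ Finset.range N,
        (Real.cot (π * (2 * (j : ℝ) + 1) / (2 * N)) *
          ∏ i, Real.cot (π * (2 * (j : ℝ) + 1) / (2 * (a i : ℝ)))) =
      ((-1 : ℝ) ^ k / (N' : ℝ)) * ∑ j ∈ Finset.range N',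
        (Real.cot (π * (2 * (j : ℝ) + 1) / (2 * N')) *
          ∏ i, Real.cot (π * (2 * (j : ℝ) + 1) / (2 * (a i : ℝ)))) :=
  zagier_signature_formula_well_defined_general k a N N' hN0 hN'0 hN hN'
end
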